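/- Let 𝒜 be a collection of hyperplanes in Q = S₁ × ⋯ × Sₙ, no two of which are parallel, and let Pₖ be the distorted measures with parameter δ ∈ (0, 1/2]. Then for each 1 ≤ k ≤ n, E_{k-1}[αₖ(x)²] ≤ (1/|Sₖ|²) · ∑_{F₁, F₂ ⊆ [k-1]} ν(F₁ ∪ F₂), where ν(J) = ∏_{j ∈ J} 1/((1−δ)|Sⱼ|). -/

import Mathlib

open Finset

attribute [local instance] Classical.propDecidable

/-- A hyperplane in a product `∀ i, S i`: each coordinate factor is either
the full set or a singleton. -/
structure Hyperplane {ι : Type*} (S : ι → Type*) where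
  Y : ∀ i, Set (S i)
  full_or_singleton : ∀ i, Y i = Set.univ ∨ ∃ a, Y i = {a}

namespace Hyperplane

variable {ι : Type*} {S : ι → Type*}

/-- The set of points of the hyperplane. -/
def toSet (A : Hyperplane S) : Set (∀ i, S i) := {x | ∀ i, x i ∈ A.Y i}

/-- The set of fixed coordinates. -/
def fixedSet (A : Hyperplane S) : Set ι := {i | A.Y i ≠ Set.univ}

/-- The fixed coordinates as a `Finset`. -/
noncomputable def fixedFinset [Fintype ι] (A : Hyperplane S) : Finset ι :=
  Finset.univ.filter fun i => A.Y i ≠ Set.univ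

end Hyperplane

section Distortion

variable {n : ℕ} {S : Fin n → Type*}

/-- The proportion of the fibre through `x` in direction `k` covered by `B`. -/
noncomputable def alpha [∀ i, Fintype (S i)] (B : Set (∀ i, S i)) (k : Fin n)
    (x : ∀ i, S i) : ℝ :=
  (Finset.univ.filter fun y : S k => Function.update x k y ∈ B).card / Fintype.card (S k)

/-- The distorted point masses `P_k` of the distortion method, as densities on the
full product: `P 0` is uniform, and `P (k+1)` reweights `P k` on each fibre in
direction `k` according to the covered set `B k`. -/
noncomputable def distP [∀ i, Fintype (S i)] (B : Fin n → Set (∀ i, S i)) (δ : ℝ) :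
    ℕ → (∀ i, S i) → ℝ
  | 0, _ => 1 / Fintype.card (∀ i, S i)
  | (k + 1), x =>
    (if h : k < n then
      (if x ∈ B ⟨k, h⟩ then
        max 0 ((alpha (B ⟨k, h⟩) ⟨k, h⟩ x - δ) / (alpha (B ⟨k, h⟩) ⟨k, h⟩ x * (1 - δ)))
      else
        min (1 / (1 - alpha (B ⟨k, h⟩) ⟨k, h⟩ x)) (1 / (1 - δ)))
     else 1) * distP B δ k x

/-- The `P_k`-measure of a subset of the product. -/
noncomputable def distPMeas [∀ i, Fintype (S i)] (B : Fin n → Set (∀ i, S i)) (δ : ℝ)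
    (k : ℕ) (X : Set (∀ i, S i)) : ℝ :=
  ∑ z : ∀ i, S i, if z ∈ X then distP B δ k z else 0

/-- `X` depends only on the coordinates `i` with `i < m`. -/
def DependsOnLT (X : Set (∀ i, S i)) (m : ℕ) : Prop :=
  ∀ x y : ∀ i, S i, (∀ i : Fin n, (i : ℕ) < m → x i = y i) → x ∈ X → y ∈ X

/-- `B_k`: the union of the hyperplanes of `𝒜` whose largest fixed coordinate is `k`. -/
noncomputable def coverSet [∀ i, Fintype (S i)] (𝒜 : Finset (Hyperplane S)) (k : Fin n) :
    Set (∀ i, S i) :=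
  {x | ∃ A ∈ 𝒜, A.fixedFinset.max = (k : WithBot (Fin n)) ∧ x ∈ A.toSet}

/-- `A^{[m]}`: the hyperplane obtained from `A` by replacing the factors with
index `≥ m` by the full sets. -/
def projSet (A : Hyperplane S) (m : ℕ) : Set (∀ i, S i) :=
  {x | ∀ i : Fin n, (i : ℕ) < m → x i ∈ A.Y i}

end Distortion


section Aux

open Function

variable {n : ℕ} {S : Fin n → Type*} [∀ i, Fintype (S i)]

lemma alpha_nonneg (B : Set (∀ i, S i)) (k : Fin n) (x : ∀ i, S i) :
    0 ≤ alpha B k x := by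
  unfold alpha; positivity

lemma alpha_le_one (B : Set (∀ i, S i)) (k : Fin n) (x : ∀ i, S i)
    (hk : 0 < Fintype.card (S k)) : alpha B k x ≤ 1 := by
  unfold alpha
  rw [div_le_one (by exact_mod_cast hk)]
  exact_mod_cast Finset.card_filter_le _ _

lemma alpha_update (B : Set (∀ i, S i)) (k : Fin n) (x : ∀ i, S i) (y : S k) :
    alpha B k (Function.update x k y) = alpha B k x := by
  unfold alpha
  have : (Finset.univ.filter fun y' : S k => Function.update (Function.update x k y) k y' ∈ B)
      = Finset.univ.filter fun y' : S k => Function.update x k y' ∈ B := by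
    apply Finset.filter_congr; intro y' _; simp [Function.update_idem]
  rw [this]

lemma distP_succ (B : Fin n → Set (∀ i, S i)) (δ : ℝ) (k : ℕ) (x : ∀ i, S i) :
    distP B δ (k + 1) x =
    (if h : k < n then
      (if x ∈ B ⟨k, h⟩ then
        max 0 ((alpha (B ⟨k, h⟩) ⟨k, h⟩ x - δ) / (alpha (B ⟨k, h⟩) ⟨k, h⟩ x * (1 - δ)))
      else
        min (1 / (1 - alpha (B ⟨k, h⟩) ⟨k, h⟩ x)) (1 / (1 - δ)))
     else 1) * distP B δ k x := rfl

lemma mem_coverSet_congr (𝒜 : Finset (Hyperplane S)) (k : Fin n)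
    {z w : ∀ i, S i} (h : ∀ j : Fin n, (j : ℕ) ≤ (k : ℕ) → z j = w j) :
    z ∈ coverSet 𝒜 k ↔ w ∈ coverSet 𝒜 k := by
  unfold coverSet
  simp only [Set.mem_setOf_eq]
  constructor <;> rintro ⟨A, hA, hmax, hz⟩ <;> refine ⟨A, hA, hmax, fun j => ?_⟩
  · by_cases hj : (j : ℕ) ≤ (k : ℕ)
    · rw [← h j hj]; exact hz j
    · have : A.Y j = Set.univ := by
        by_contra hne
        have hjm : j ∈ A.fixedFinset := by
          simp [Hyperplane.fixedFinset, hne]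
        have := Finset.le_max hjm
        rw [hmax] at this
        exact hj (by exact_mod_cast this)
      rw [this]; trivial
  · by_cases hj : (j : ℕ) ≤ (k : ℕ)
    · rw [h j hj]; exact hz j
    · have : A.Y j = Set.univ := by
        by_contra hne
        have hjm : j ∈ A.fixedFinset := by
          simp [Hyperplane.fixedFinset, hne]
        have := Finset.le_max hjm
        rw [hmax] at this
        exact hj (by exact_mod_cast this)
      rw [this]; trivial

lemma alpha_coverSet_congr (𝒜 : Finset (Hyperplane S)) (k : Fin n)
    {z w : ∀ i, S i} (h : ∀ j : Fin n, (j : ℕ) < (k : ℕ) → z j = w j) :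
    alpha (coverSet 𝒜 k) k z = alpha (coverSet 𝒜 k) k w := by
  unfold alpha
  have : (Finset.univ.filter fun y : S k => Function.update z k y ∈ coverSet 𝒜 k)
      = Finset.univ.filter fun y : S k => Function.update w k y ∈ coverSet 𝒜 k := by
    apply Finset.filter_congr
    intro y _
    apply mem_coverSet_congr
    intro j hj
    rcases eq_or_ne j k with rfl | hne
    · simp
    · have hjk : (j : ℕ) < (k : ℕ) := lt_of_le_of_ne hj (fun hc => hne (Fin.ext hc))
      rw [Function.update_of_ne hne, Function.update_of_ne hne]
      exact h j hjk
  rw [this]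

lemma distP_congr (𝒜 : Finset (Hyperplane S)) (δ : ℝ) (m : ℕ)
    {z w : ∀ i, S i} (h : ∀ j : Fin n, (j : ℕ) < m → z j = w j) :
    distP (coverSet 𝒜) δ m z = distP (coverSet 𝒜) δ m w := by
  induction m with
  | zero => rfl
  | succ k ih =>
    rw [distP_succ, distP_succ]
    have hk : ∀ j : Fin n, (j : ℕ) < k → z j = w j := fun j hj => h j (Nat.lt_succ_of_lt hj)
    rw [ih hk]
    congr 1
    by_cases hkn : k < n
    · simp only [dif_pos hkn]
      have hmem : z ∈ coverSet 𝒜 ⟨k, hkn⟩ ↔ w ∈ coverSet 𝒜 ⟨k, hkn⟩ :=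
        mem_coverSet_congr 𝒜 ⟨k, hkn⟩ (fun j hj => h j (Nat.lt_succ_of_le hj))
      have halpha : alpha (coverSet 𝒜 ⟨k, hkn⟩) ⟨k, hkn⟩ z
          = alpha (coverSet 𝒜 ⟨k, hkn⟩) ⟨k, hkn⟩ w :=
        alpha_coverSet_congr 𝒜 ⟨k, hkn⟩ (fun j hj => h j (Nat.lt_succ_of_lt hj))
      rw [halpha]
      by_cases hz : z ∈ coverSet 𝒜 ⟨k, hkn⟩
      · rw [if_pos hz, if_pos (hmem.mp hz)]
      · rw [if_neg hz, if_neg (fun hw => hz (hmem.mpr hw))]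
    · simp [hkn]

lemma factor_nonneg {δ : ℝ} (hδ1 : δ < 1) (B : Set (∀ i, S i)) (k : Fin n)
    (x : ∀ i, S i) (hk : 0 < Fintype.card (S k)) :
    0 ≤ (if x ∈ B then
        max 0 ((alpha B k x - δ) / (alpha B k x * (1 - δ)))
      else
        min (1 / (1 - alpha B k x)) (1 / (1 - δ))) := by
  split_ifs
  · exact le_max_left _ _
  · have h1 : (0:ℝ) ≤ 1 - alpha B k x := by
      have := alpha_le_one B k x hk; linarith
    have h2 : (0:ℝ) < 1 - δ := by linarith
    exact le_min (by positivity) (by positivity)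

lemma factor_le {δ : ℝ} (hδ0 : 0 < δ) (hδ1 : δ < 1) (B : Set (∀ i, S i)) (k : Fin n)
    (x : ∀ i, S i) :
    (if x ∈ B then
        max 0 ((alpha B k x - δ) / (alpha B k x * (1 - δ)))
      else
        min (1 / (1 - alpha B k x)) (1 / (1 - δ))) ≤ 1 / (1 - δ) := by
  have h2 : (0:ℝ) < 1 - δ := by linarith
  split_ifs
  · apply max_le (by positivity)
    rcases le_or_gt (alpha B k x) 0 with h | h
    · have h0 := alpha_nonneg B k x
      have : alpha B k x = 0 := le_antisymm h h0
      rw [this, zero_mul, div_zero]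
      positivity
    · rw [div_le_div_iff₀ (by positivity) h2]
      ring_nf
      nlinarith [alpha_nonneg B k x]
  · exact min_le_right _ _

lemma distP_nonneg (hS : ∀ i, 0 < Fintype.card (S i)) {δ : ℝ} (hδ1 : δ < 1)
    (B : Fin n → Set (∀ i, S i)) (m : ℕ) (x : ∀ i, S i) :
    0 ≤ distP B δ m x := by
  induction m with
  | zero =>
    show (0:ℝ) ≤ 1 / Fintype.card (∀ i, S i)
    positivity
  | succ k ih =>
    rw [distP_succ]
    apply mul_nonneg _ ih
    by_cases hk : k < n
    · rw [dif_pos hk]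
      exact factor_nonneg hδ1 _ _ _ (hS _)
    · rw [dif_neg hk]; norm_num

lemma sum_update (k : Fin n) (f : (∀ i, S i) → ℝ) :
    ∑ z : ∀ i, S i, ∑ y : S k, f (Function.update z k y)
      = (Fintype.card (S k) : ℝ) * ∑ z : ∀ i, S i, f z := by
  classical
  set e := Equiv.piSplitAt k S with he
  have hupd : ∀ (a : S k) (t : ∀ j : {j // j ≠ k}, S j) (y : S k),
      Function.update (e.symm (a, t)) k y = e.symm (y, t) := by
    intro a t y
    funext j
    rcases eq_or_ne j k with rfl | hne
    · rw [Function.update_self]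
      exact (congrArg Prod.fst (e.apply_symm_apply (y, t))).symm
    · rw [Function.update_of_ne hne]
      show (e.symm (a, t)) j = (e.symm (y, t)) j
      simp [he, Equiv.piSplitAt_symm_apply, hne]
  calc ∑ z : ∀ i, S i, ∑ y : S k, f (Function.update z k y)
      = ∑ p : S k × (∀ j : {j // j ≠ k}, S j), ∑ y : S k, f (Function.update (e.symm p) k y) :=
        (Equiv.sum_comp e.symm _).symm
    _ = ∑ a : S k, ∑ t : ∀ j : {j // j ≠ k}, S j, ∑ y : S k, f (e.symm (y, t)) := by
        rw [Fintype.sum_prod_type]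
        exact Finset.sum_congr rfl fun a _ => Finset.sum_congr rfl fun t _ =>
          Finset.sum_congr rfl fun y _ => by rw [hupd]
    _ = (Fintype.card (S k) : ℝ) * ∑ t : ∀ j : {j // j ≠ k}, S j, ∑ y : S k, f (e.symm (y, t)) := by
        rw [Finset.sum_const, nsmul_eq_mul, Fintype.card_eq_nat_card]
        norm_num [Nat.card_eq_fintype_card]
    _ = (Fintype.card (S k) : ℝ) * ∑ z : ∀ i, S i, f z := by
        congr 1
        rw [Finset.sum_comm]
        exact (Fintype.sum_prod_type (f := fun p => f (e.symm p))).symm.trans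
          (Equiv.sum_comp e.symm f)

lemma core_ineq (s a : ℕ) (δ : ℝ) (hs : 0 < s) (ha : a ≤ s) (hδ0 : 0 < δ)
    (hδ1 : δ ≤ 1 / 2) :
    (a : ℝ) * max 0 (((a : ℝ) / s - δ) / (((a : ℝ) / s) * (1 - δ)))
      + ((s : ℝ) - a) * min (1 / (1 - (a : ℝ) / s)) (1 / (1 - δ)) ≤ s := by
  have hsR : (0:ℝ) < s := by exact_mod_cast hs
  have haR : (a:ℝ) ≤ s := by exact_mod_cast ha
  have ha0 : (0:ℝ) ≤ a := by positivity
  set α : ℝ := (a : ℝ) / s with hα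
  have hα0 : 0 ≤ α := by positivity
  have hα1 : α ≤ 1 := by rw [hα, div_le_one hsR]; exact haR
  have hδ' : δ < 1 := by linarith
  have hsa : (s : ℝ) - a = s * (1 - α) := by
    rw [hα]; field_simp
  rcases le_or_gt α δ with hc | hc
  · have hmax : max 0 ((α - δ) / (α * (1 - δ))) = 0 := by
      apply max_eq_left
      apply div_nonpos_of_nonpos_of_nonneg (by linarith)
      exact mul_nonneg hα0 (by linarith)
    rw [hmax, mul_zero, zero_add]
    have h1α : 0 < 1 - α := by linarith
    calc ((s:ℝ) - a) * min (1 / (1 - α)) (1 / (1 - δ))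
        ≤ ((s:ℝ) - a) * (1 / (1 - α)) :=
          mul_le_mul_of_nonneg_left (min_le_left _ _) (by linarith)
      _ = s := by rw [hsa]; field_simp
  · have hαpos : 0 < α := lt_trans hδ0 hc
    have h1δ : (0:ℝ) < 1 - δ := by linarith
    have hmax : max 0 ((α - δ) / (α * (1 - δ))) = (α - δ) / (α * (1 - δ)) := by
      apply max_eq_right
      exact div_nonneg (by linarith) (mul_nonneg hα0 (by linarith))
    rw [hmax]
    have haα : (a : ℝ) = s * α := by rw [hα]; field_simp
    have e1 : (a : ℝ) * ((α - δ) / (α * (1 - δ))) = s * ((α - δ) / (1 - δ)) := by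
      rw [haα]; field_simp
    calc (a : ℝ) * ((α - δ) / (α * (1 - δ)))
          + ((s:ℝ) - a) * min (1 / (1 - α)) (1 / (1 - δ))
        ≤ s * ((α - δ) / (1 - δ)) + ((s:ℝ) - a) * (1 / (1 - δ)) := by
          rw [e1]
          apply add_le_add le_rfl
          exact mul_le_mul_of_nonneg_left (min_le_right _ _) (by linarith)
      _ = s * ((α - δ) / (1 - δ)) + s * ((1 - α) / (1 - δ)) := by
          rw [hsa]; ring
      _ = s := by
          rw [← mul_add, ← add_div]
          have : (α - δ + (1 - α)) = 1 - δ := by ring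
          rw [this, div_self (ne_of_gt h1δ), mul_one]

lemma factor_sum_le (hS : ∀ i, 0 < Fintype.card (S i)) {δ : ℝ} (hδ0 : 0 < δ)
    (hδ1 : δ ≤ 1 / 2) (B : Set (∀ i, S i)) (k : Fin n) (x : ∀ i, S i) :
    ∑ y : S k, (if Function.update x k y ∈ B then
        max 0 ((alpha B k (Function.update x k y) - δ) /
          (alpha B k (Function.update x k y) * (1 - δ)))
      else
        min (1 / (1 - alpha B k (Function.update x k y))) (1 / (1 - δ)))
      ≤ (Fintype.card (S k) : ℝ) := by
  have hrw : ∀ y : S k, alpha B k (Function.update x k y) = alpha B k x :=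
    fun y => alpha_update B k x y
  simp only [hrw]
  set c1 : ℝ := max 0 ((alpha B k x - δ) / (alpha B k x * (1 - δ))) with hc1
  set c0 : ℝ := min (1 / (1 - alpha B k x)) (1 / (1 - δ)) with hc0
  set T : Finset (S k) := Finset.univ.filter fun y => Function.update x k y ∈ B with hT
  have hsum : ∑ y : S k, (if Function.update x k y ∈ B then c1 else c0)
      = (T.card : ℝ) * c1 + ((Fintype.card (S k) : ℝ) - T.card) * c0 := by
    rw [Finset.sum_ite, Finset.sum_const, Finset.sum_const, nsmul_eq_mul, nsmul_eq_mul]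
    have hn : T.card + (Finset.univ.filter fun y => ¬ Function.update x k y ∈ B).card
        = Fintype.card (S k) := by
      rw [hT]
      simpa using Finset.card_filter_add_card_filter_not
        (s := (Finset.univ : Finset (S k))) (p := fun y => Function.update x k y ∈ B)
    have hcast : ((Finset.univ.filter fun y => ¬ Function.update x k y ∈ B).card : ℝ)
        = (Fintype.card (S k) : ℝ) - T.card := by
      have := congrArg (Nat.cast : ℕ → ℝ) hn
      push_cast at this
      linarith
    rw [hcast, hT]
  rw [hsum]
  have halpha : alpha B k x = (T.card : ℝ) / (Fintype.card (S k)) := rfl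
  have hle : T.card ≤ Fintype.card (S k) := by
    rw [← Finset.card_univ]; exact Finset.card_filter_le _ _
  have := core_ineq (Fintype.card (S k)) T.card δ (hS k) hle hδ0 hδ1
  rw [hc1, hc0, halpha]
  exact this



lemma cyl_bound (hS : ∀ i, 0 < Fintype.card (S i)) {δ : ℝ} (hδ0 : 0 < δ) (hδ1 : δ ≤ 1 / 2)
    (𝒜 : Finset (Hyperplane S)) :
    ∀ (m : ℕ) (J : Finset (Fin n)), (∀ j ∈ J, (j : ℕ) < m) →
    ∀ (W : ∀ j, Set (S j)), (∀ j ∈ J, (W j).Subsingleton) →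
    ∑ z : ∀ i, S i, (if ∀ j ∈ J, z j ∈ W j then distP (coverSet 𝒜) δ m z else 0)
      ≤ ∏ j ∈ J, 1 / ((1 - δ) * Fintype.card (S j)) := by
  have hδ' : δ < 1 := by linarith
  intro m
  induction m with
  | zero =>
    intro J hJ W hW
    have hJ0 : J = ∅ := Finset.eq_empty_of_forall_notMem
      (fun j hj => absurd (hJ j hj) (Nat.not_lt_zero _))
    subst hJ0
    simp only [Finset.notMem_empty, false_implies, implies_true, if_true, Finset.prod_empty]
    show ∑ _z : ∀ i, S i, (1 / (Fintype.card (∀ i, S i) : ℝ)) ≤ 1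
    rw [Finset.sum_const, Finset.card_univ, nsmul_eq_mul]
    rcases eq_or_ne ((Fintype.card (∀ i, S i) : ℝ)) 0 with h | h
    · rw [h, zero_mul]; norm_num
    · rw [mul_one_div, div_self h]
  | succ m ih =>
    intro J hJ W hW
    by_cases hmn : m < n
    · set jm : Fin n := ⟨m, hmn⟩ with hjm
      have hspos : (0:ℝ) < Fintype.card (S jm) := by exact_mod_cast hS jm
      have h1δ : (0:ℝ) < 1 - δ := by linarith
      set g : (∀ i, S i) → ℝ := fun z =>
        if ∀ j ∈ J, z j ∈ W j then distP (coverSet 𝒜) δ (m + 1) z else 0 with hg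
      have hkey := sum_update jm g
      have hPmupd : ∀ (z : ∀ i, S i) (y : S jm),
          distP (coverSet 𝒜) δ m (Function.update z jm y) = distP (coverSet 𝒜) δ m z := by
        intro z y
        apply distP_congr
        intro j hjlt
        have hne : j ≠ jm := by
          intro hc
          rw [hc] at hjlt
          exact absurd hjlt (lt_irrefl _)
        rw [Function.update_of_ne hne]
      by_cases hmJ : jm ∈ J
      · -- the fibre direction is a fixed coordinate of the cylinder
        set J' := J.erase jm with hJ'def
        have hJ' : ∀ j ∈ J', (j : ℕ) < m := by
          intro j hj
          have h1 := Finset.mem_of_mem_erase hj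
          have h2 : j ≠ jm := Finset.ne_of_mem_erase hj
          have h3 := hJ j h1
          have h4 : (j : ℕ) ≠ m := fun hc => h2 (Fin.ext hc)
          omega
        have hW' : ∀ j ∈ J', (W j).Subsingleton :=
          fun j hj => hW j (Finset.mem_of_mem_erase hj)
        have hpt : ∀ z : ∀ i, S i, ∑ y : S jm, g (Function.update z jm y)
            ≤ (1 / (1 - δ)) *
              (if ∀ j ∈ J', z j ∈ W j then distP (coverSet 𝒜) δ m z else 0) := by
          intro z
          by_cases hcyl : ∀ j ∈ J', z j ∈ W j
          · rw [if_pos hcyl]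
            have hcond : ∀ y : S jm,
                ((∀ j ∈ J, Function.update z jm y j ∈ W j) ↔ y ∈ W jm) := by
              intro y
              constructor
              · intro h
                have := h jm hmJ
                rwa [Function.update_self] at this
              · intro hy j hj
                rcases eq_or_ne j jm with rfl | hne
                · rwa [Function.update_self]
                · rw [Function.update_of_ne hne]
                  exact hcyl j (Finset.mem_erase.mpr ⟨hne, hj⟩)
            have hPz : 0 ≤ distP (coverSet 𝒜) δ m z := distP_nonneg hS hδ' _ _ _
            calc ∑ y : S jm, g (Function.update z jm y)
                ≤ ∑ y : S jm, (if y ∈ W jm then (1 / (1 - δ)) * distP (coverSet 𝒜) δ m z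
                    else 0) := by
                  apply Finset.sum_le_sum
                  intro y _
                  simp only [hg]
                  by_cases hy : y ∈ W jm
                  · rw [if_pos ((hcond y).mpr hy), if_pos hy, distP_succ, dif_pos hmn,
                      ← hjm, hPmupd z y]
                    exact mul_le_mul_of_nonneg_right (factor_le hδ0 hδ' _ _ _) hPz
                  · rw [if_neg (fun hc => hy ((hcond y).mp hc)), if_neg hy]
              _ = ((Finset.univ.filter fun y : S jm => y ∈ W jm).card : ℝ)
                    * ((1 / (1 - δ)) * distP (coverSet 𝒜) δ m z) := by
                  rw [Finset.sum_ite, Finset.sum_const, Finset.sum_const_zero, add_zero,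
                    nsmul_eq_mul]
              _ ≤ 1 * ((1 / (1 - δ)) * distP (coverSet 𝒜) δ m z) := by
                  apply mul_le_mul_of_nonneg_right _ (by positivity)
                  have hcard : (Finset.univ.filter fun y : S jm => y ∈ W jm).card ≤ 1 := by
                    apply Finset.card_le_one.mpr
                    intro a ha b hb
                    exact hW jm hmJ (Finset.mem_filter.mp ha).2 (Finset.mem_filter.mp hb).2
                  exact_mod_cast hcard
              _ = (1 / (1 - δ)) * distP (coverSet 𝒜) δ m z := one_mul _
          · rw [if_neg hcyl, mul_zero]
            apply le_of_eq
            apply Finset.sum_eq_zero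
            intro y _
            simp only [hg]
            rw [if_neg]
            intro hc
            apply hcyl
            intro j hj
            have hne : j ≠ jm := Finset.ne_of_mem_erase hj
            have := hc j (Finset.mem_of_mem_erase hj)
            rwa [Function.update_of_ne hne] at this
        have hsum2 : (Fintype.card (S jm) : ℝ) * ∑ z : ∀ i, S i, g z
            ≤ (1 / (1 - δ)) * ∑ z : ∀ i, S i,
              (if ∀ j ∈ J', z j ∈ W j then distP (coverSet 𝒜) δ m z else 0) := by
          rw [← hkey, Finset.mul_sum]
          exact Finset.sum_le_sum (fun z _ => hpt z)
        have hIH := ih J' hJ' W hW'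
        have hfin : (Fintype.card (S jm) : ℝ) * ∑ z : ∀ i, S i, g z
            ≤ (1 / (1 - δ)) * ∏ j ∈ J', 1 / ((1 - δ) * Fintype.card (S j)) :=
          hsum2.trans (mul_le_mul_of_nonneg_left hIH (by positivity))
        have hgoal : ∑ z : ∀ i, S i, g z
            ≤ (1 / ((1 - δ) * Fintype.card (S jm))) *
              ∏ j ∈ J', 1 / ((1 - δ) * Fintype.card (S j)) := by
          have heq : (1 / ((1 - δ) * (Fintype.card (S jm) : ℝ))) *
              ∏ j ∈ J', 1 / ((1 - δ) * Fintype.card (S j))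
              = ((1 / (1 - δ)) * ∏ j ∈ J', 1 / ((1 - δ) * Fintype.card (S j)))
                / Fintype.card (S jm) := by
            field_simp
          rw [heq, le_div_iff₀ hspos, mul_comm]
          exact hfin
        calc ∑ z : ∀ i, S i, g z
            ≤ (1 / ((1 - δ) * Fintype.card (S jm))) *
              ∏ j ∈ J', 1 / ((1 - δ) * Fintype.card (S j)) := hgoal
          _ = ∏ j ∈ J, 1 / ((1 - δ) * Fintype.card (S j)) := by
            rw [hJ'def]
            exact Finset.mul_prod_erase J
              (fun j => 1 / ((1 - δ) * (Fintype.card (S j) : ℝ))) hmJ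
      · -- the fibre direction is free
        have hJ' : ∀ j ∈ J, (j : ℕ) < m := by
          intro j hj
          have h3 := hJ j hj
          have hne : j ≠ jm := fun hc => hmJ (hc ▸ hj)
          have h4 : (j : ℕ) ≠ m := fun hc => hne (Fin.ext hc)
          omega
        have hcond : ∀ (z : ∀ i, S i) (y : S jm),
            ((∀ j ∈ J, Function.update z jm y j ∈ W j) ↔ (∀ j ∈ J, z j ∈ W j)) := by
          intro z y
          constructor
          · intro h j hj
            have hne : j ≠ jm := fun hc => hmJ (hc ▸ hj)
            have := h j hj
            rwa [Function.update_of_ne hne] at this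
          · intro h j hj
            have hne : j ≠ jm := fun hc => hmJ (hc ▸ hj)
            rw [Function.update_of_ne hne]
            exact h j hj
        have hpt : ∀ z : ∀ i, S i, ∑ y : S jm, g (Function.update z jm y)
            ≤ (Fintype.card (S jm) : ℝ) *
              (if ∀ j ∈ J, z j ∈ W j then distP (coverSet 𝒜) δ m z else 0) := by
          intro z
          by_cases hcyl : ∀ j ∈ J, z j ∈ W j
          · rw [if_pos hcyl]
            have hPz : 0 ≤ distP (coverSet 𝒜) δ m z := distP_nonneg hS hδ' _ _ _
            calc ∑ y : S jm, g (Function.update z jm y)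
                = ∑ y : S jm, (if Function.update z jm y ∈ coverSet 𝒜 jm then
                      max 0 ((alpha (coverSet 𝒜 jm) jm (Function.update z jm y) - δ) /
                        (alpha (coverSet 𝒜 jm) jm (Function.update z jm y) * (1 - δ)))
                    else
                      min (1 / (1 - alpha (coverSet 𝒜 jm) jm (Function.update z jm y)))
                        (1 / (1 - δ))) * distP (coverSet 𝒜) δ m z := by
                  apply Finset.sum_congr rfl
                  intro y _
                  simp only [hg]
                  rw [if_pos ((hcond z y).mpr hcyl), distP_succ, dif_pos hmn, ← hjm,
                    hPmupd z y]
              _ = (∑ y : S jm, (if Function.update z jm y ∈ coverSet 𝒜 jm then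
                      max 0 ((alpha (coverSet 𝒜 jm) jm (Function.update z jm y) - δ) /
                        (alpha (coverSet 𝒜 jm) jm (Function.update z jm y) * (1 - δ)))
                    else
                      min (1 / (1 - alpha (coverSet 𝒜 jm) jm (Function.update z jm y)))
                        (1 / (1 - δ)))) * distP (coverSet 𝒜) δ m z := by
                  rw [Finset.sum_mul]
              _ ≤ (Fintype.card (S jm) : ℝ) * distP (coverSet 𝒜) δ m z :=
                  mul_le_mul_of_nonneg_right (factor_sum_le hS hδ0 hδ1 _ jm z) hPz
          · rw [if_neg hcyl, mul_zero]
            apply le_of_eq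
            apply Finset.sum_eq_zero
            intro y _
            simp only [hg]
            exact if_neg (fun hc => hcyl ((hcond z y).mp hc))
        have hsum2 : (Fintype.card (S jm) : ℝ) * ∑ z : ∀ i, S i, g z
            ≤ (Fintype.card (S jm) : ℝ) * ∑ z : ∀ i, S i,
              (if ∀ j ∈ J, z j ∈ W j then distP (coverSet 𝒜) δ m z else 0) := by
          rw [← hkey, Finset.mul_sum]
          exact Finset.sum_le_sum (fun z _ => hpt z)
        have h2 := le_of_mul_le_mul_left hsum2 hspos
        exact h2.trans (ih J hJ' W hW)
    · -- m ≥ n : the step is trivial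
      have hJ' : ∀ j ∈ J, (j : ℕ) < m :=
        fun j _ => lt_of_lt_of_le j.isLt (Nat.le_of_not_lt hmn)
      refine le_trans (le_of_eq (Finset.sum_congr rfl fun z _ => ?_)) (ih J hJ' W hW)
      rw [distP_succ, dif_neg hmn, one_mul]

end Aux

set_option maxHeartbeats 1000000 in
/-- Second moment bound: for non-parallel hyperplanes,
`E_{k-1}[α_k(x)²] ≤ |S_k|⁻² ∑_{F₁,F₂ ⊆ [k-1]} ν(F₁ ∪ F₂)` where
`ν(J) = ∏_{j ∈ J} 1/((1-δ)|S_j|)`. -/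
theorem moment_le_sum_nu {n : ℕ} {S : Fin n → Type*} [∀ i, Fintype (S i)]
    (hS : ∀ i, 2 ≤ Fintype.card (S i)) (δ : ℝ) (hδ0 : 0 < δ) (hδ1 : δ ≤ 1 / 2)
    (𝒜 : Finset (Hyperplane S))
    (hpar : ∀ A₁ ∈ 𝒜, ∀ A₂ ∈ 𝒜, A₁ ≠ A₂ → A₁.fixedFinset ≠ A₂.fixedFinset)
    (i : Fin n) :
    ∑ z : ∀ j, S j, (alpha (coverSet 𝒜 i) i z) ^ 2 * distP (coverSet 𝒜) δ (i : ℕ) z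
      ≤ (1 / (Fintype.card (S i) : ℝ) ^ 2) *
        ∑ F₁ ∈ (Finset.univ.filter fun j : Fin n => (j : ℕ) < (i : ℕ)).powerset,
          ∑ F₂ ∈ (Finset.univ.filter fun j : Fin n => (j : ℕ) < (i : ℕ)).powerset,
            ∏ j ∈ F₁ ∪ F₂, 1 / ((1 - δ) * Fintype.card (S j)) := by
  classical
  have hScard : ∀ j, 0 < Fintype.card (S j) := fun j => lt_of_lt_of_le (by norm_num) (hS j)
  have hδ' : δ < 1 := by linarith
  have h1δ : (0:ℝ) < 1 - δ := by linarith
  have hspos : (0:ℝ) < Fintype.card (S i) := by exact_mod_cast hScard i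
  set 𝒜i : Finset (Hyperplane S) :=
    𝒜.filter (fun A => A.fixedFinset.max = (i : WithBot (Fin n))) with h𝒜i
  have himem : ∀ A ∈ 𝒜i, i ∈ A.fixedFinset := by
    intro A hA
    exact Finset.mem_of_max (Finset.mem_filter.mp hA).2
  have hff : ∀ (A : Hyperplane S) (j : Fin n), j ∈ A.fixedFinset ↔ A.Y j ≠ Set.univ := by
    intro A j
    simp [Hyperplane.fixedFinset]
  have hsing : ∀ A ∈ 𝒜i, ∃ a, A.Y i = {a} := by
    intro A hA
    rcases A.full_or_singleton i with h | h
    · exact absurd h ((hff A i).mp (himem A hA))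
    · exact h
  have hElt : ∀ A ∈ 𝒜i, ∀ j ∈ A.fixedFinset.erase i, (j : ℕ) < (i : ℕ) := by
    intro A hA j hj
    have h1 := Finset.mem_of_mem_erase hj
    have h2 : j ≠ i := Finset.ne_of_mem_erase hj
    have h3 := Finset.le_max h1
    rw [(Finset.mem_filter.mp hA).2] at h3
    have h4 : j ≤ i := by exact_mod_cast h3
    exact lt_of_le_of_ne (Fin.le_def.mp h4) (fun hc => h2 (Fin.ext hc))
  -- Step A: pointwise bound on alpha
  have hA : ∀ z : ∀ j, S j, alpha (coverSet 𝒜 i) i z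
      ≤ (∑ A ∈ 𝒜i, (if z ∈ projSet A (i : ℕ) then (1:ℝ) else 0)) / Fintype.card (S i) := by
    intro z
    have hnat : (Finset.univ.filter fun y : S i =>
        Function.update z i y ∈ coverSet 𝒜 i).card
        ≤ ∑ A ∈ 𝒜i, (if z ∈ projSet A (i : ℕ) then 1 else 0) := by
      have hsub : (Finset.univ.filter fun y : S i =>
          Function.update z i y ∈ coverSet 𝒜 i)
          ⊆ 𝒜i.biUnion (fun A => Finset.univ.filter fun y : S i =>
            Function.update z i y ∈ A.toSet) := by
        intro y hy
        obtain ⟨A, hA𝒜, hmax, hmem⟩ := (Finset.mem_filter.mp hy).2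
        apply Finset.mem_biUnion.mpr
        exact ⟨A, Finset.mem_filter.mpr ⟨hA𝒜, hmax⟩,
          Finset.mem_filter.mpr ⟨Finset.mem_univ y, hmem⟩⟩
      calc (Finset.univ.filter fun y : S i =>
            Function.update z i y ∈ coverSet 𝒜 i).card
          ≤ (𝒜i.biUnion (fun A => Finset.univ.filter fun y : S i =>
              Function.update z i y ∈ A.toSet)).card := Finset.card_le_card hsub
        _ ≤ ∑ A ∈ 𝒜i, (Finset.univ.filter fun y : S i =>
              Function.update z i y ∈ A.toSet).card := Finset.card_biUnion_le
        _ ≤ ∑ A ∈ 𝒜i, (if z ∈ projSet A (i : ℕ) then 1 else 0) := by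
            apply Finset.sum_le_sum
            intro A hA
            obtain ⟨a, hYa⟩ := hsing A hA
            by_cases hz : z ∈ projSet A (i : ℕ)
            · rw [if_pos hz]
              apply Finset.card_le_one.mpr
              intro y hy y' hy'
              have h1 := (Finset.mem_filter.mp hy).2 i
              have h2 := (Finset.mem_filter.mp hy').2 i
              rw [Function.update_self, hYa] at h1 h2
              rw [h1, h2]
            · rw [if_neg hz, Nat.le_zero, Finset.card_eq_zero,
                Finset.eq_empty_iff_forall_notMem]
              intro y hy
              apply hz
              intro j hj
              have hne : j ≠ i := fun hc => absurd hj (by rw [hc]; exact lt_irrefl _)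
              have := (Finset.mem_filter.mp hy).2 j
              rwa [Function.update_of_ne hne] at this
    have hcast : ((Finset.univ.filter fun y : S i =>
        Function.update z i y ∈ coverSet 𝒜 i).card : ℝ)
        ≤ ∑ A ∈ 𝒜i, (if z ∈ projSet A (i : ℕ) then (1:ℝ) else 0) := by
      calc ((Finset.univ.filter fun y : S i =>
            Function.update z i y ∈ coverSet 𝒜 i).card : ℝ)
          ≤ ((∑ A ∈ 𝒜i, (if z ∈ projSet A (i : ℕ) then 1 else 0) : ℕ) : ℝ) := by
            exact_mod_cast hnat
        _ = ∑ A ∈ 𝒜i, (if z ∈ projSet A (i : ℕ) then (1:ℝ) else 0) := by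
            push_cast
            apply Finset.sum_congr rfl
            intro A _
            split_ifs <;> norm_num
    show ((Finset.univ.filter fun y : S i =>
        Function.update z i y ∈ coverSet 𝒜 i).card : ℝ) / Fintype.card (S i) ≤ _
    gcongr
  -- Step C: pair cylinder bound
  have hC : ∀ A₁ ∈ 𝒜i, ∀ A₂ ∈ 𝒜i,
      ∑ z : ∀ j, S j, ((if z ∈ projSet A₁ (i : ℕ) then (1:ℝ) else 0) *
        (if z ∈ projSet A₂ (i : ℕ) then (1:ℝ) else 0) * distP (coverSet 𝒜) δ (i : ℕ) z)
      ≤ ∏ j ∈ (A₁.fixedFinset.erase i) ∪ (A₂.fixedFinset.erase i),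
          1 / ((1 - δ) * Fintype.card (S j)) := by
    intro A₁ hA₁ A₂ hA₂
    set J : Finset (Fin n) := (A₁.fixedFinset.erase i) ∪ (A₂.fixedFinset.erase i) with hJdef
    set W : ∀ j, Set (S j) := fun j => A₁.Y j ∩ A₂.Y j with hW
    have hiff : ∀ z : ∀ j, S j,
        ((z ∈ projSet A₁ (i : ℕ) ∧ z ∈ projSet A₂ (i : ℕ)) ↔ (∀ j ∈ J, z j ∈ W j)) := by
      intro z
      constructor
      · rintro ⟨h1, h2⟩ j hj
        have hlt : (j : ℕ) < (i : ℕ) := by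
          rcases Finset.mem_union.mp hj with hj | hj
          · exact hElt A₁ hA₁ j hj
          · exact hElt A₂ hA₂ j hj
        exact ⟨h1 j hlt, h2 j hlt⟩
      · intro h
        constructor <;> intro j hjlt
        · by_cases hj : j ∈ J
          · exact (h j hj).1
          · have hj1 : j ∉ A₁.fixedFinset.erase i := fun hc => hj (Finset.mem_union_left _ hc)
            have hne : j ≠ i := fun hc => absurd hjlt (by rw [hc]; exact lt_irrefl _)
            have : j ∉ A₁.fixedFinset := fun hc => hj1 (Finset.mem_erase.mpr ⟨hne, hc⟩)
            have hfull : A₁.Y j = Set.univ := by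
              by_contra hcc
              exact this ((hff A₁ j).mpr hcc)
            rw [hfull]; trivial
        · by_cases hj : j ∈ J
          · exact (h j hj).2
          · have hj1 : j ∉ A₂.fixedFinset.erase i := fun hc => hj (Finset.mem_union_right _ hc)
            have hne : j ≠ i := fun hc => absurd hjlt (by rw [hc]; exact lt_irrefl _)
            have : j ∉ A₂.fixedFinset := fun hc => hj1 (Finset.mem_erase.mpr ⟨hne, hc⟩)
            have hfull : A₂.Y j = Set.univ := by
              by_contra hcc
              exact this ((hff A₂ j).mpr hcc)
            rw [hfull]; trivial
    have hJlt : ∀ j ∈ J, (j : ℕ) < (i : ℕ) := by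
      intro j hj
      rcases Finset.mem_union.mp hj with hj | hj
      · exact hElt A₁ hA₁ j hj
      · exact hElt A₂ hA₂ j hj
    have hWsub : ∀ j ∈ J, (W j).Subsingleton := by
      intro j hj
      rcases Finset.mem_union.mp hj with hj' | hj'
      · have := Finset.mem_of_mem_erase hj'
        rcases A₁.full_or_singleton j with h | ⟨a, ha⟩
        · exact absurd h ((hff A₁ j).mp this)
        · intro x hx y hy
          have hx1 : x ∈ A₁.Y j := hx.1
          have hy1 : y ∈ A₁.Y j := hy.1
          rw [ha] at hx1 hy1
          rw [hx1, hy1]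
      · have := Finset.mem_of_mem_erase hj'
        rcases A₂.full_or_singleton j with h | ⟨a, ha⟩
        · exact absurd h ((hff A₂ j).mp this)
        · intro x hx y hy
          have hx1 : x ∈ A₂.Y j := hx.2
          have hy1 : y ∈ A₂.Y j := hy.2
          rw [ha] at hx1 hy1
          rw [hx1, hy1]
    have hrw : ∀ z : ∀ j, S j, ((if z ∈ projSet A₁ (i : ℕ) then (1:ℝ) else 0) *
        (if z ∈ projSet A₂ (i : ℕ) then (1:ℝ) else 0) * distP (coverSet 𝒜) δ (i : ℕ) z)
        = if ∀ j ∈ J, z j ∈ W j then distP (coverSet 𝒜) δ (i : ℕ) z else 0 := by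
      intro z
      by_cases h1 : z ∈ projSet A₁ (i : ℕ) <;> by_cases h2 : z ∈ projSet A₂ (i : ℕ)
      · rw [if_pos h1, if_pos h2, if_pos ((hiff z).mp ⟨h1, h2⟩), one_mul, one_mul]
      · rw [if_pos h1, if_neg h2, if_neg (fun hc => h2 ((hiff z).mpr hc).2)]
        ring
      · rw [if_neg h1, if_pos h2, if_neg (fun hc => h1 ((hiff z).mpr hc).1)]
        ring
      · rw [if_neg h1, if_neg h2, if_neg (fun hc => h1 ((hiff z).mpr hc).1)]
        ring
    calc ∑ z : ∀ j, S j, ((if z ∈ projSet A₁ (i : ℕ) then (1:ℝ) else 0) *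
          (if z ∈ projSet A₂ (i : ℕ) then (1:ℝ) else 0) * distP (coverSet 𝒜) δ (i : ℕ) z)
        = ∑ z : ∀ j, S j, (if ∀ j ∈ J, z j ∈ W j
            then distP (coverSet 𝒜) δ (i : ℕ) z else 0) :=
          Finset.sum_congr rfl (fun z _ => hrw z)
      _ ≤ ∏ j ∈ J, 1 / ((1 - δ) * Fintype.card (S j)) := by
          have h := cyl_bound hScard hδ0 hδ1 𝒜 (i : ℕ) J hJlt W hWsub
          convert h using 2 with z
          congr 1
  -- Step B: expand the square and sum
  have hPz : ∀ z : ∀ j, S j, 0 ≤ distP (coverSet 𝒜) δ (i : ℕ) z :=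
    fun z => distP_nonneg hScard hδ' _ _ _
  have hB : ∑ z : ∀ j, S j, (alpha (coverSet 𝒜 i) i z) ^ 2 * distP (coverSet 𝒜) δ (i : ℕ) z
      ≤ (1 / (Fintype.card (S i) : ℝ) ^ 2) * ∑ A₁ ∈ 𝒜i, ∑ A₂ ∈ 𝒜i,
          ∑ z : ∀ j, S j, ((if z ∈ projSet A₁ (i : ℕ) then (1:ℝ) else 0) *
            (if z ∈ projSet A₂ (i : ℕ) then (1:ℝ) else 0) *
            distP (coverSet 𝒜) δ (i : ℕ) z) := by
    have hpt : ∀ z : ∀ j, S j,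
        (alpha (coverSet 𝒜 i) i z) ^ 2 * distP (coverSet 𝒜) δ (i : ℕ) z
        ≤ (1 / (Fintype.card (S i) : ℝ) ^ 2) * ∑ A₁ ∈ 𝒜i, ∑ A₂ ∈ 𝒜i,
            ((if z ∈ projSet A₁ (i : ℕ) then (1:ℝ) else 0) *
              (if z ∈ projSet A₂ (i : ℕ) then (1:ℝ) else 0) *
              distP (coverSet 𝒜) δ (i : ℕ) z) := by
      intro z
      have h0 := alpha_nonneg (coverSet 𝒜 i) i z
      have h1 := hA z
      have hsq : (alpha (coverSet 𝒜 i) i z) ^ 2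
          ≤ ((∑ A ∈ 𝒜i, (if z ∈ projSet A (i : ℕ) then (1:ℝ) else 0))
              / Fintype.card (S i)) ^ 2 := by
        apply pow_le_pow_left₀ h0 h1
      calc (alpha (coverSet 𝒜 i) i z) ^ 2 * distP (coverSet 𝒜) δ (i : ℕ) z
          ≤ ((∑ A ∈ 𝒜i, (if z ∈ projSet A (i : ℕ) then (1:ℝ) else 0))
              / Fintype.card (S i)) ^ 2 * distP (coverSet 𝒜) δ (i : ℕ) z :=
            mul_le_mul_of_nonneg_right hsq (hPz z)
        _ = (1 / (Fintype.card (S i) : ℝ) ^ 2) * ∑ A₁ ∈ 𝒜i, ∑ A₂ ∈ 𝒜i,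
              ((if z ∈ projSet A₁ (i : ℕ) then (1:ℝ) else 0) *
                (if z ∈ projSet A₂ (i : ℕ) then (1:ℝ) else 0) *
                distP (coverSet 𝒜) δ (i : ℕ) z) := by
            have hexp : ∑ A₁ ∈ 𝒜i, ∑ A₂ ∈ 𝒜i,
                ((if z ∈ projSet A₁ (i : ℕ) then (1:ℝ) else 0) *
                  (if z ∈ projSet A₂ (i : ℕ) then (1:ℝ) else 0) *
                  distP (coverSet 𝒜) δ (i : ℕ) z)
                = ((∑ A ∈ 𝒜i, (if z ∈ projSet A (i : ℕ) then (1:ℝ) else 0)) *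
                    (∑ A ∈ 𝒜i, (if z ∈ projSet A (i : ℕ) then (1:ℝ) else 0))) *
                    distP (coverSet 𝒜) δ (i : ℕ) z := by
              rw [Finset.sum_mul_sum, Finset.sum_mul]
              apply Finset.sum_congr rfl
              intro A₁ _
              rw [Finset.sum_mul]
            rw [hexp, div_pow]
            ring
    calc ∑ z : ∀ j, S j, (alpha (coverSet 𝒜 i) i z) ^ 2 * distP (coverSet 𝒜) δ (i : ℕ) z
        ≤ ∑ z : ∀ j, S j, ((1 / (Fintype.card (S i) : ℝ) ^ 2) * ∑ A₁ ∈ 𝒜i, ∑ A₂ ∈ 𝒜i,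
            ((if z ∈ projSet A₁ (i : ℕ) then (1:ℝ) else 0) *
              (if z ∈ projSet A₂ (i : ℕ) then (1:ℝ) else 0) *
              distP (coverSet 𝒜) δ (i : ℕ) z)) := Finset.sum_le_sum (fun z _ => hpt z)
      _ = (1 / (Fintype.card (S i) : ℝ) ^ 2) * ∑ A₁ ∈ 𝒜i, ∑ A₂ ∈ 𝒜i,
            ∑ z : ∀ j, S j, ((if z ∈ projSet A₁ (i : ℕ) then (1:ℝ) else 0) *
              (if z ∈ projSet A₂ (i : ℕ) then (1:ℝ) else 0) *
              distP (coverSet 𝒜) δ (i : ℕ) z) := by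
          rw [← Finset.mul_sum]
          congr 1
          rw [Finset.sum_comm]
          apply Finset.sum_congr rfl
          intro A₁ _
          rw [Finset.sum_comm]
  -- Step D: compare with the sum over the powerset
  have hν : ∀ F : Finset (Fin n), (0:ℝ) ≤ ∏ j ∈ F, 1 / ((1 - δ) * Fintype.card (S j)) := by
    intro F
    apply Finset.prod_nonneg
    intro j _
    have : (0:ℝ) < Fintype.card (S j) := by exact_mod_cast hScard j
    positivity
  set P : Finset (Finset (Fin n)) :=
    (Finset.univ.filter fun j : Fin n => (j : ℕ) < (i : ℕ)).powerset with hP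
  have hEsub : ∀ A ∈ 𝒜i, A.fixedFinset.erase i ∈ P := by
    intro A hA
    rw [hP, Finset.mem_powerset]
    intro j hj
    exact Finset.mem_filter.mpr ⟨Finset.mem_univ j, hElt A hA j hj⟩
  have hEinj : ∀ A₁ ∈ 𝒜i, ∀ A₂ ∈ 𝒜i,
      A₁.fixedFinset.erase i = A₂.fixedFinset.erase i → A₁ = A₂ := by
    intro A₁ hA₁ A₂ hA₂ heq
    by_contra hne
    apply hpar A₁ (Finset.mem_filter.mp hA₁).1 A₂ (Finset.mem_filter.mp hA₂).1 hne
    have h1 : A₁.fixedFinset = insert i (A₁.fixedFinset.erase i) :=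
      (Finset.insert_erase (himem A₁ hA₁)).symm
    have h2 : A₂.fixedFinset = insert i (A₂.fixedFinset.erase i) :=
      (Finset.insert_erase (himem A₂ hA₂)).symm
    rw [h1, h2, heq]
  have hD : ∑ A₁ ∈ 𝒜i, ∑ A₂ ∈ 𝒜i,
      ∏ j ∈ (A₁.fixedFinset.erase i) ∪ (A₂.fixedFinset.erase i),
        1 / ((1 - δ) * Fintype.card (S j))
      ≤ ∑ F₁ ∈ P, ∑ F₂ ∈ P, ∏ j ∈ F₁ ∪ F₂, 1 / ((1 - δ) * Fintype.card (S j)) := by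
    have hinner : ∀ (F₁ : Finset (Fin n)), ∑ A₂ ∈ 𝒜i,
        ∏ j ∈ F₁ ∪ (A₂.fixedFinset.erase i), 1 / ((1 - δ) * Fintype.card (S j))
        ≤ ∑ F₂ ∈ P, ∏ j ∈ F₁ ∪ F₂, 1 / ((1 - δ) * Fintype.card (S j)) := by
      intro F₁
      rw [← Finset.sum_image (f := fun F₂ => ∏ j ∈ F₁ ∪ F₂,
        1 / ((1 - δ) * (Fintype.card (S j) : ℝ)))
        (g := fun A : Hyperplane S => A.fixedFinset.erase i) (fun A hA B hB => hEinj A hA B hB)]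
      apply Finset.sum_le_sum_of_subset_of_nonneg
      · intro F hF
        obtain ⟨A, hA, rfl⟩ := Finset.mem_image.mp hF
        exact hEsub A hA
      · intro F _ _
        exact hν _
    calc ∑ A₁ ∈ 𝒜i, ∑ A₂ ∈ 𝒜i,
          ∏ j ∈ (A₁.fixedFinset.erase i) ∪ (A₂.fixedFinset.erase i),
            1 / ((1 - δ) * Fintype.card (S j))
        ≤ ∑ A₁ ∈ 𝒜i, ∑ F₂ ∈ P, ∏ j ∈ (A₁.fixedFinset.erase i) ∪ F₂,
            1 / ((1 - δ) * Fintype.card (S j)) :=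
          Finset.sum_le_sum (fun A₁ _ => hinner _)
      _ ≤ ∑ F₁ ∈ P, ∑ F₂ ∈ P, ∏ j ∈ F₁ ∪ F₂, 1 / ((1 - δ) * Fintype.card (S j)) := by
          rw [← Finset.sum_image (f := fun F₁ => ∑ F₂ ∈ P, ∏ j ∈ F₁ ∪ F₂,
            1 / ((1 - δ) * (Fintype.card (S j) : ℝ)))
            (g := fun A : Hyperplane S => A.fixedFinset.erase i)
            (fun A hA B hB => hEinj A hA B hB)]
          apply Finset.sum_le_sum_of_subset_of_nonneg
          · intro F hF
            obtain ⟨A, hA, rfl⟩ := Finset.mem_image.mp hF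
            exact hEsub A hA
          · intro F _ _
            exact Finset.sum_nonneg (fun F₂ _ => hν _)
  -- assemble
  calc ∑ z : ∀ j, S j, (alpha (coverSet 𝒜 i) i z) ^ 2 * distP (coverSet 𝒜) δ (i : ℕ) z
      ≤ (1 / (Fintype.card (S i) : ℝ) ^ 2) * ∑ A₁ ∈ 𝒜i, ∑ A₂ ∈ 𝒜i,
          ∑ z : ∀ j, S j, ((if z ∈ projSet A₁ (i : ℕ) then (1:ℝ) else 0) *
            (if z ∈ projSet A₂ (i : ℕ) then (1:ℝ) else 0) *
            distP (coverSet 𝒜) δ (i : ℕ) z) := hB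
    _ ≤ (1 / (Fintype.card (S i) : ℝ) ^ 2) * ∑ A₁ ∈ 𝒜i, ∑ A₂ ∈ 𝒜i,
          ∏ j ∈ (A₁.fixedFinset.erase i) ∪ (A₂.fixedFinset.erase i),
            1 / ((1 - δ) * Fintype.card (S j)) := by
        apply mul_le_mul_of_nonneg_left _ (by positivity)
        apply Finset.sum_le_sum
        intro A₁ hA₁
        apply Finset.sum_le_sum
        intro A₂ hA₂
        exact hC A₁ hA₁ A₂ hA₂
    _ ≤ (1 / (Fintype.card (S i) : ℝ) ^ 2) *
          ∑ F₁ ∈ P, ∑ F₂ ∈ P, ∏ j ∈ F₁ ∪ F₂, 1 / ((1 - δ) * Fintype.card (S j)) :=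
        mul_le_mul_of_nonneg_left hD (by positivity)
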